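/- arXiv:2412.11336 — 4 statements merged into one kernel-verified Lean document; each statement's English description precedes it below -/
import Mathlib

section
/- Suppose L ⊆ {1,...,K} is such that all rows Ξ_i for i ∈ L are equal. Then the dynamics ẋ = Qᵀ softmax(β Ξ x + w) − x are exactly invariant under the coarse-graining transformation that replaces the rows indexed by L of Q and Ξ by Q*_L = (∑_{i∈L} Q_i e^{w_i})/(∑_{i∈L} e^{w_i}) and Ξ*_L = (∑_{i∈L} Ξ_i e^{w_i})/(∑_{i∈L} e^{w_i}) respectively, and the weights by w*_L = log(∑_{k∈L} e^{w_k}). That is, for every x ∈ ℝ^N the right-hand side of the original dynamics equals that of the coarse-grained dynamics. -/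
open Finset

/-- `softmax(z)_i = e^{z_i} / ∑_k e^{z_k}`. -/
noncomputable def softmax {ι : Type*} [Fintype ι] (z : ι → ℝ) : ι → ℝ :=
  fun i => Real.exp (z i) / ∑ k, Real.exp (z k)

/-- The right-hand side of the dynamics `ẋ = Qᵀ softmax(β Ξ x + w) − x`,
for an arbitrary (finite) index set of patterns. -/
noncomputable def dynRHS {ι : Type*} [Fintype ι] {N : ℕ}
    (Q Ξ : ι → Fin N → ℝ) (w : ι → ℝ) (β : ℝ) (x : Fin N → ℝ) : Fin N → ℝ :=
  fun j => (∑ i, Q i j * softmax (fun k => β * (∑ l, Ξ k l * x l) + w k) i) - x j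

/-- Coarse-grained `Q`: rows outside `L` are kept, the rows of `L` are merged into
`Q*_L = (∑_{i∈L} Q_i e^{w_i}) / (∑_{i∈L} e^{w_i})` (index `none`). -/
noncomputable def coarseQ {K N : ℕ} (Q : Fin K → Fin N → ℝ) (w : Fin K → ℝ)
    (L : Finset (Fin K)) : Option {i : Fin K // i ∉ L} → Fin N → ℝ :=
  fun o => o.elim ((∑ i ∈ L, Real.exp (w i))⁻¹ • ∑ i ∈ L, Real.exp (w i) • Q i)
    (fun i => Q i.1)

/-- Coarse-grained weights: `w*_L = log ∑_{k∈L} e^{w_k}`. -/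
noncomputable def coarsew {K : ℕ} (w : Fin K → ℝ) (L : Finset (Fin K)) :
    Option {i : Fin K // i ∉ L} → ℝ :=
  fun o => o.elim (Real.log (∑ k ∈ L, Real.exp (w k))) (fun i => w i.1)

/-- if all patterns (rows of `Ξ`) indexed by `L` are identical, the dynamics are
exactly invariant under the coarse-graining transformation. -/
theorem coarseGraining_invariant_of_identical_patterns {K N : ℕ}
    (Q Ξ : Fin K → Fin N → ℝ) (w : Fin K → ℝ) (β : ℝ) (hβ : 0 < β)
    (L : Finset (Fin K)) (hL : L.Nonempty)
    (hident : ∀ r ∈ L, ∀ s ∈ L, Ξ r = Ξ s) :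
    ∀ x : Fin N → ℝ,
      dynRHS Q Ξ w β x = dynRHS (coarseQ Q w L) (coarseQ Ξ w L) (coarsew w L) β x := by
  intro x
  funext j
  obtain ⟨r0, hr0⟩ := hL
  set S : ℝ := ∑ k ∈ L, Real.exp (w k) with hSdef
  have hS : (0:ℝ) < S := Finset.sum_pos (fun k _ => Real.exp_pos _) ⟨r0, hr0⟩
  set a : ℝ := ∑ l, Ξ r0 l * x l with hadef
  set z : Fin K → ℝ := fun k => β * (∑ l, Ξ k l * x l) + w k with hzdef
  set z' : Option {i : Fin K // i ∉ L} → ℝ :=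
    fun o => β * (∑ l, coarseQ Ξ w L o l * x l) + coarsew w L o with hz'def
  have hzL : ∀ k ∈ L, z k = β * a + w k := by
    intro k hk
    simp only [hzdef, hadef, hident k hk r0 hr0]
  have hrow : ∀ l, coarseQ Ξ w L none l = Ξ r0 l := by
    intro l
    have h1 : ∀ i ∈ L, Real.exp (w i) • Ξ i = Real.exp (w i) • Ξ r0 := by
      intro i hi; rw [hident i hi r0 hr0]
    simp only [coarseQ, Option.elim]
    rw [Finset.sum_congr rfl h1, ← Finset.sum_smul, smul_smul, ← hSdef,
      inv_mul_cancel₀ hS.ne', one_smul]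
  have hznone : z' none = β * a + Real.log S := by
    simp only [hz'def, coarsew, Option.elim, hadef, hSdef]
    congr 2
    exact Finset.sum_congr rfl fun l _ => by rw [hrow]
  have hEnone : Real.exp (z' none) = Real.exp (β * a) * S := by
    rw [hznone, Real.exp_add, Real.exp_log hS]
  have hEL : ∑ k ∈ L, Real.exp (z k) = Real.exp (β * a) * S := by
    rw [hSdef, Finset.mul_sum]
    exact Finset.sum_congr rfl fun k hk => by rw [hzL k hk, Real.exp_add]
  have hzsome : ∀ i : {i : Fin K // i ∉ L}, z' (some i) = z i.1 := by
    intro i; simp [hz'def, hzdef, coarseQ, coarsew]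
  have hsum : ∀ (f : Fin K → ℝ) (g : Option {i : Fin K // i ∉ L} → ℝ),
      g none = ∑ k ∈ L, f k → (∀ i, g (some i) = f i.1) →
      (∑ o, g o) = ∑ k, f k := by
    intro f g hn hs
    rw [Fintype.sum_option, hn]
    have h2 : (∑ i : {i : Fin K // i ∉ L}, g (some i)) = ∑ k ∈ Lᶜ, f k := by
      rw [Finset.sum_subtype Lᶜ (fun x => Finset.mem_compl) f]
      exact Finset.sum_congr rfl fun i _ => hs i
    rw [h2, Finset.sum_add_sum_compl]
  have hD : (∑ o, Real.exp (z' o)) = ∑ k, Real.exp (z k) := by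
    apply hsum
    · rw [hEnone, hEL]
    · intro i; rw [hzsome]
  have hQnone : coarseQ Q w L none j = S⁻¹ * ∑ i ∈ L, Real.exp (w i) * Q i j := by
    simp only [coarseQ, Option.elim, Pi.smul_apply, smul_eq_mul, Finset.sum_apply, hSdef]
  have hNum : (∑ o, coarseQ Q w L o j * Real.exp (z' o))
      = ∑ k, Q k j * Real.exp (z k) := by
    apply hsum
    · rw [hQnone, hEnone]
      have : ∀ k ∈ L, Q k j * Real.exp (z k) = Real.exp (β * a) * (Real.exp (w k) * Q k j) := by
        intro k hk; rw [hzL k hk, Real.exp_add]; ring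
      rw [Finset.sum_congr rfl this, ← Finset.mul_sum]
      field_simp
    · intro i
      rw [hzsome]
      simp [coarseQ]
  show (∑ i, Q i j * (Real.exp (z i) / ∑ k, Real.exp (z k))) - x j
      = (∑ o, coarseQ Q w L o j * (Real.exp (z' o) / ∑ o', Real.exp (z' o'))) - x j
  rw [hD]
  congr 1
  simp only [← mul_div_assoc]
  rw [← Finset.sum_div, ← Finset.sum_div, hNum]
end

section
/- Let s ∈ ℝ^K be a probability vector with strictly positive, pairwise distinct entries, and let J_s = D_s − s⊗s. Then λ ≠ 0 is an eigenvalue of J_s if and only if ∑_{i=1}^K s_i/(s_i − λ) = 0 (in particular λ ≠ s_i for all i). -/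
open Matrix

/-- for a probability vector `s` with positive pairwise-distinct entries,
`λ ≠ 0` is an eigenvalue of `J_s = D_s − s⊗s` iff `λ ≠ s_i` for all `i` and
`∑_i s_i/(s_i − λ) = 0`. -/
theorem softmaxJacobian_nonzero_eigenvalue_iff {K : ℕ} (s : Fin K → ℝ)
    (hpos : ∀ i, 0 < s i) (hsum : ∑ i, s i = 1) (hdist : Function.Injective s)
    (lam : ℝ) (hlam : lam ≠ 0) :
    (∃ z : Fin K → ℝ, z ≠ 0 ∧
        (Matrix.diagonal s - Matrix.vecMulVec s s).mulVec z = lam • z)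
      ↔ ((∀ i, lam ≠ s i) ∧ ∑ i, s i / (s i - lam) = 0) := by
  have hK : 0 < K := by
    rcases Nat.eq_zero_or_pos K with h | h
    · subst h; simp at hsum
    · exact h
  have hcomp : ∀ (z : Fin K → ℝ) (i : Fin K),
      ((Matrix.diagonal s - Matrix.vecMulVec s s).mulVec z) i
        = s i * z i - s i * ∑ j, s j * z j := by
    intro z i
    rw [Matrix.sub_mulVec, Pi.sub_apply, Matrix.mulVec_diagonal]
    congr 1
    simp only [Matrix.mulVec, Matrix.vecMulVec_apply, dotProduct]
    rw [Finset.mul_sum]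
    exact Finset.sum_congr rfl fun j _ => by ring
  constructor
  · rintro ⟨z, hz, heig⟩
    set c := ∑ j, s j * z j with hc
    have key : ∀ i, (s i - lam) * z i = s i * c := by
      intro i
      have h := congrFun heig i
      rw [hcomp] at h
      simp only [Pi.smul_apply, smul_eq_mul] at h
      linarith [h]
    have hcne : c ≠ 0 := by
      intro hc0
      rw [hc0] at key
      simp only [mul_zero] at key
      obtain ⟨j, hj⟩ : ∃ j, z j ≠ 0 := by
        by_contra h
        push_neg at h
        exact hz (funext h)
      have hlj : s j = lam := by
        rcases mul_eq_zero.mp (key j) with h | h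
        · exact sub_eq_zero.mp h
        · exact absurd h hj
      have hzi : ∀ i, i ≠ j → z i = 0 := by
        intro i hi
        rcases mul_eq_zero.mp (key i) with h | h
        · exact absurd (hdist ((sub_eq_zero.mp h).trans hlj.symm)) hi
        · exact h
      have hcj : c = s j * z j := by
        rw [hc]
        exact Finset.sum_eq_single j (fun i _ hi => by rw [hzi i hi]; ring)
          (fun h => absurd (Finset.mem_univ j) h)
      rw [hc0] at hcj
      exact (mul_ne_zero (hpos j).ne' hj) hcj.symm
    have hne : ∀ i, lam ≠ s i := by
      intro i heqi
      have h0 : s i * c = 0 := by rw [← key i, ← heqi]; ring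
      exact (mul_ne_zero (hpos i).ne' hcne) h0
    refine ⟨hne, ?_⟩
    have hsl : ∀ i, s i - lam ≠ 0 := fun i => sub_ne_zero.mpr fun h => hne i h.symm
    have hz' : ∀ i, z i = s i * c / (s i - lam) := fun i =>
      (eq_div_iff (hsl i)).mpr (by rw [mul_comm]; exact key i)
    have hcc : c = c * 1 + lam * c * ∑ i, s i / (s i - lam) := by
      calc c = ∑ i, s i * z i := hc
        _ = ∑ i, (c * s i + lam * c * (s i / (s i - lam))) := by
            refine Finset.sum_congr rfl fun i _ => ?_
            rw [hz' i]
            have h := hsl i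
            field_simp
            ring
        _ = c * ∑ i, s i + lam * c * ∑ i, s i / (s i - lam) := by
            rw [Finset.sum_add_distrib, ← Finset.mul_sum, ← Finset.mul_sum]
        _ = c * 1 + lam * c * ∑ i, s i / (s i - lam) := by rw [hsum]
    have h0 : lam * c * ∑ i, s i / (s i - lam) = 0 := by linarith
    exact (mul_eq_zero.mp h0).resolve_left (mul_ne_zero hlam hcne)
  · rintro ⟨hne, hS⟩
    have hsl : ∀ i, s i - lam ≠ 0 := fun i => sub_ne_zero.mpr fun h => hne i h.symm
    refine ⟨fun i => s i / (s i - lam), ?_, ?_⟩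
    · intro h
      have := congrFun h ⟨0, hK⟩
      simp only [Pi.zero_apply] at this
      exact (div_ne_zero (hpos _).ne' (hsl _)) this
    · have hc1 : ∑ j, s j * (s j / (s j - lam)) = 1 := by
        have hterm : ∀ j : Fin K, s j * (s j / (s j - lam))
            = s j + lam * (s j / (s j - lam)) := by
          intro j
          have h := hsl j
          field_simp
          ring
        rw [Finset.sum_congr rfl fun j _ => hterm j, Finset.sum_add_distrib,
          ← Finset.mul_sum, hS, hsum]
        ring
      funext i
      rw [hcomp, hc1]
      simp only [Pi.smul_apply, smul_eq_mul]
      have h := hsl i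
      field_simp
      ring
end

section
/- Let s ∈ ℝ^K be a probability vector with distinct positive entries and let λ be a real number, λ ≠ s_i for all i, satisfying ∑_{i=1}^K s_i/(s_i − λ) = 0. Then the vector z with z_i = s_i/(s_i − λ) is a nonzero eigenvector of J_s = D_s − s⊗s with eigenvalue λ. -/
open Matrix

/-- any solution `λ` (with `λ ≠ s_i` for all `i`) of `∑_i s_i/(s_i − λ) = 0`
is an eigenvalue of `J_s = D_s − s⊗s`, with nonzero eigenvector `z_i = s_i/(s_i − λ)`. -/
theorem eigenvector_from_secular_equation {K : ℕ} (s : Fin K → ℝ)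
    (hpos : ∀ i, 0 < s i) (hsum : ∑ i, s i = 1) (hdist : Function.Injective s)
    (lam : ℝ) (hne : ∀ i, lam ≠ s i) (hroot : ∑ i, s i / (s i - lam) = 0)
    (z : Fin K → ℝ) (hz : z = fun i => s i / (s i - lam)) :
    z ≠ 0 ∧ (Matrix.diagonal s - Matrix.vecMulVec s s).mulVec z = lam • z := by
  have hden : ∀ i, s i - lam ≠ 0 := fun i => sub_ne_zero.mpr (fun h => hne i h.symm)
  have hKey : ∀ i, (s i - lam) * z i = s i := by
    intro i
    rw [hz, mul_comm]
    exact div_mul_cancel₀ (s i) (hden i)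
  have hK : 0 < K := by
    by_contra h
    push_neg at h
    interval_cases K
    simp at hsum
  constructor
  · intro h0
    have i : Fin K := ⟨0, hK⟩
    have := hKey i
    rw [h0] at this
    simp at this
    exact (hpos i).ne' this.symm
  · have hz0 : ∑ j, z j = 0 := by rw [hz]; exact hroot
    have hsz : ∑ j, s j * z j = 1 := by
      have : ∀ j, s j * z j = s j + lam * z j := by
        intro j
        have := hKey j
        ring_nf at this ⊢
        linarith
      rw [Finset.sum_congr rfl (fun j _ => this j), Finset.sum_add_distrib, hsum,
        ← Finset.mul_sum, hz0, mul_zero, add_zero]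
    funext i
    simp only [Matrix.sub_mulVec, Pi.sub_apply, Matrix.mulVec_diagonal,
      Pi.smul_apply, smul_eq_mul]
    have hv : (Matrix.vecMulVec s s).mulVec z i = s i * ∑ j, s j * z j := by
      simp [Matrix.mulVec, Matrix.vecMulVec, dotProduct, Finset.mul_sum, mul_assoc]
    rw [hv, hsz, mul_one]
    have := hKey i
    ring_nf at this ⊢
    linarith
end

section
/- Let Ξ_1,...,Ξ_K ∈ ℝ^K be unit vectors with pairwise inner products cos μ (cos μ ≠ −1/(K−1), cos μ ≠ 1), let w = 0, and let Ξ* = (1/K)∑ Ξ_i. Then softmax(βΞΞ*)_i = 1/K for all i, and the maximum of vᵀΞᵀ(D_s − s⊗s)Ξ v over unit vectors v ∈ ℝ^K equals (1 − cos μ)/K; consequently the Hessian D²V(Ξ*) = I − βΞᵀ(D_s − s⊗s)Ξ is positive definite whenever β(1 − cos μ) < K. -/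
/-!
Let `c = cos μ` and `P = I - 𝟙𝟙ᵀ/K`. Equiangularity says `ΞΞᵀ = (1 - c) I + c 𝟙𝟙ᵀ`, so
`ΞΞ* = ΞΞᵀ𝟙/K` is a constant vector, the softmax is uniform, and `D_s - s⊗s = P/K`. As `P` is
an orthogonal projection, `vᵀΞᵀ(D_s - s⊗s)Ξv = ‖PΞv‖²/K`, and `(PΞ)(PΞ)ᵀ = P(ΞΞᵀ)P = (1 - c) P`
has largest eigenvalue `1 - c` (eigenvector `e_i - e_j`). So `‖PΞv‖² ≤ (1 - c)‖v‖²`, with equality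
at `v ∝ (PΞ)ᵀ(e_i - e_j) = Ξ_i - Ξ_j`; positive definiteness of the Hessian follows.
-/

open Matrix

theorem softmax_const {ι : Type*} [Fintype ι] (a : ℝ) :
    softmax (fun _ : ι => a) = fun _ => 1 / (Fintype.card ι : ℝ) := by
  funext i
  have : Nonempty ι := ⟨i⟩
  have : (Fintype.card ι : ℝ) ≠ 0 := Nat.cast_ne_zero.2 Fintype.card_ne_zero
  simp only [softmax, Finset.sum_const, Finset.card_univ, nsmul_eq_mul]
  field_simp

section Rayleigh

variable {m n : Type*} [Fintype m] [Fintype n]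

theorem dotProduct_mulVec_transpose_mul_self (A : Matrix m n ℝ) (v : n → ℝ) :
    v ⬝ᵥ (Aᵀ * A) *ᵥ v = (A *ᵥ v) ⬝ᵥ (A *ᵥ v) := by
  rw [← mulVec_mulVec, dotProduct_mulVec, vecMul_transpose]

theorem sq_dotProduct_le (u v : n → ℝ) : (u ⬝ᵥ v) ^ 2 ≤ (u ⬝ᵥ u) * (v ⬝ᵥ v) := by
  simpa only [dotProduct, sq] using Finset.sum_mul_sq_le_sq_mul_sq Finset.univ u v

theorem dotProduct_self_mulVec_le_of_transpose (A : Matrix m n ℝ) {c : ℝ} (hc : 0 ≤ c)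
    (hAt : ∀ y, (Aᵀ *ᵥ y) ⬝ᵥ (Aᵀ *ᵥ y) ≤ c * (y ⬝ᵥ y)) (x : n → ℝ) :
    (A *ᵥ x) ⬝ᵥ (A *ᵥ x) ≤ c * (x ⬝ᵥ x) := by
  set p := A *ᵥ x
  have hp : p ⬝ᵥ p = (Aᵀ *ᵥ p) ⬝ᵥ x := by
    rw [dotProduct_mulVec, mulVec_transpose]
  have hpp : 0 ≤ p ⬝ᵥ p := by simpa using dotProduct_star_self_nonneg p
  have hxx : 0 ≤ x ⬝ᵥ x := by simpa using dotProduct_star_self_nonneg x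
  have hCS : (p ⬝ᵥ p) ^ 2 ≤ c * (p ⬝ᵥ p) * (x ⬝ᵥ x) := calc
    (p ⬝ᵥ p) ^ 2 ≤ ((Aᵀ *ᵥ p) ⬝ᵥ (Aᵀ *ᵥ p)) * (x ⬝ᵥ x) := hp ▸ sq_dotProduct_le _ _
    _ ≤ c * (p ⬝ᵥ p) * (x ⬝ᵥ x) := by gcongr; exact hAt p
  nlinarith [mul_nonneg hc hxx]

theorem exists_dotProduct_self_eq_one_of_mul_transpose_mulVec (A : Matrix m n ℝ) {c : ℝ}
    (hc : 0 < c) {u : m → ℝ} (hu : u ≠ 0) (hAu : (A * Aᵀ) *ᵥ u = c • u) :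
    ∃ v : n → ℝ, v ⬝ᵥ v = 1 ∧ (A *ᵥ v) ⬝ᵥ (A *ᵥ v) = c := by
  have huu : 0 < u ⬝ᵥ u := by simpa using dotProduct_star_self_pos_iff.2 hu
  have hAtu : (Aᵀ *ᵥ u) ⬝ᵥ (Aᵀ *ᵥ u) = c * (u ⬝ᵥ u) := by
    rw [← dotProduct_mulVec_transpose_mul_self, transpose_transpose, hAu, dotProduct_smul,
      smul_eq_mul]
  obtain ⟨r, hr, hr2⟩ : ∃ r : ℝ, 0 < r ∧ r ^ 2 = c * (u ⬝ᵥ u) :=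
    ⟨√(c * (u ⬝ᵥ u)), by positivity, Real.sq_sqrt (by positivity)⟩
  refine ⟨r⁻¹ • Aᵀ *ᵥ u, ?_, ?_⟩
  · rw [smul_dotProduct, dotProduct_smul, hAtu, smul_eq_mul, smul_eq_mul, ← hr2]
    field_simp
  · rw [mulVec_smul, mulVec_mulVec, hAu, smul_dotProduct, dotProduct_smul, smul_dotProduct,
      dotProduct_smul]
    simp only [smul_eq_mul]
    field_simp
    exact hr2.symm

end Rayleigh

theorem posDef_one_sub_of_dotProduct_mulVec_le {n : Type*} [Fintype n] [DecidableEq n]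
    {M : Matrix n n ℝ} (hM : M.IsSymm) {a : ℝ} (ha : a < 1)
    (hMa : ∀ x, x ⬝ᵥ M *ᵥ x ≤ a * (x ⬝ᵥ x)) : (1 - M).PosDef := by
  refine posDef_iff_dotProduct_mulVec.2
    ⟨isHermitian_iff_isSymm.2 (isSymm_one.sub hM), fun x hx => ?_⟩
  have hxx : 0 < x ⬝ᵥ x := by simpa using dotProduct_star_self_pos_iff.2 hx
  rw [star_trivial, sub_mulVec, one_mulVec, dotProduct_sub]
  nlinarith [hMa x]

section Centering

variable (ι : Type*) [Fintype ι] [DecidableEq ι]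

noncomputable def centeringMatrix : Matrix ι ι ℝ :=
  1 - (Fintype.card ι : ℝ)⁻¹ • of fun _ _ => 1

variable {ι}

theorem centeringMatrix_mulVec (y : ι → ℝ) :
    centeringMatrix ι *ᵥ y = fun i => y i - (∑ j, y j) / Fintype.card ι := by
  rw [centeringMatrix, sub_mulVec, one_mulVec, smul_mulVec]
  funext i
  simp [mulVec, dotProduct, div_eq_inv_mul]

theorem sum_centeringMatrix_mulVec (y : ι → ℝ) : ∑ i, (centeringMatrix ι *ᵥ y) i = 0 := by
  rcases isEmpty_or_nonempty ι with hι | hι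
  · simp
  have : (Fintype.card ι : ℝ) ≠ 0 := Nat.cast_ne_zero.2 Fintype.card_ne_zero
  simp only [centeringMatrix_mulVec, Finset.sum_sub_distrib, Finset.sum_const, Finset.card_univ,
    nsmul_eq_mul]
  field_simp
  ring

theorem centeringMatrix_mulVec_of_sum_eq_zero {y : ι → ℝ} (hy : ∑ i, y i = 0) :
    centeringMatrix ι *ᵥ y = y := by
  simp [centeringMatrix_mulVec, hy]

theorem centeringMatrix_mul_self : centeringMatrix ι * centeringMatrix ι = centeringMatrix ι :=
  ext_iff_mulVec.2 fun y => by
    rw [← mulVec_mulVec, centeringMatrix_mulVec_of_sum_eq_zero (sum_centeringMatrix_mulVec y)]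

theorem transpose_centeringMatrix : (centeringMatrix ι)ᵀ = centeringMatrix ι := by
  ext i j
  simp [centeringMatrix, one_apply, eq_comm]

theorem centeringMatrix_mul_ones : centeringMatrix ι * (of fun _ _ => 1) = 0 :=
  ext_iff_mulVec.2 fun y => by
    rw [← mulVec_mulVec, zero_mulVec, centeringMatrix_mulVec]
    funext i
    have : Nonempty ι := ⟨i⟩
    have : (Fintype.card ι : ℝ) ≠ 0 := Nat.cast_ne_zero.2 Fintype.card_ne_zero
    simp [mulVec, dotProduct]

theorem dotProduct_centeringMatrix_mulVec_le (y : ι → ℝ) :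
    y ⬝ᵥ centeringMatrix ι *ᵥ y ≤ y ⬝ᵥ y := by
  rw [centeringMatrix_mulVec]
  simp only [dotProduct, mul_sub, Finset.sum_sub_distrib]
  rw [← Finset.sum_mul, mul_div_assoc']
  exact sub_le_self _ (div_nonneg (mul_self_nonneg _) (Nat.cast_nonneg _))

theorem transpose_mul_centeringMatrix_mul {n : Type*} [Fintype n] (A : Matrix ι n ℝ) :
    Aᵀ * centeringMatrix ι * A = (centeringMatrix ι * A)ᵀ * (centeringMatrix ι * A) := by
  simp only [transpose_mul, transpose_centeringMatrix, Matrix.mul_assoc]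
  rw [← Matrix.mul_assoc (centeringMatrix ι), centeringMatrix_mul_self]

theorem diagonal_sub_vecMulVec_uniform :
    diagonal (fun _ : ι => 1 / (Fintype.card ι : ℝ)) -
        vecMulVec (fun _ => 1 / (Fintype.card ι : ℝ)) (fun _ => 1 / (Fintype.card ι : ℝ)) =
      (Fintype.card ι : ℝ)⁻¹ • centeringMatrix ι := by
  ext i j
  simp only [centeringMatrix, vecMulVec, diagonal_apply, one_apply, Matrix.sub_apply,
    Matrix.smul_apply, of_apply, smul_eq_mul]
  split_ifs <;> ring

end Centering

theorem mul_transpose_eq_of_equiangular {ι n : Type*} [DecidableEq ι] [Fintype n]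
    {Ξ : Matrix ι n ℝ} {c : ℝ} (hnorm : ∀ i, ∑ l, Ξ i l ^ 2 = 1)
    (hangle : ∀ i j, i ≠ j → ∑ l, Ξ i l * Ξ j l = c) :
    Ξ * Ξᵀ = (1 - c) • 1 + c • of fun _ _ => 1 := by
  ext i j
  rcases eq_or_ne i j with rfl | hij
  · simp [mul_apply, ← sq, hnorm]
  · simp [mul_apply, hij, hangle i j hij]

section Equiangular

variable {ι n : Type*} [Fintype ι] [DecidableEq ι] [Fintype n] {Ξ : Matrix ι n ℝ} {c : ℝ}

theorem sum_mul_sum_eq_of_mul_transpose_eq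
    (hG : Ξ * Ξᵀ = (1 - c) • 1 + c • of fun _ _ => 1) (i : ι) :
    ∑ l, Ξ i l * ∑ j, Ξ j l = 1 - c + c * Fintype.card ι := by
  have : ∑ l, Ξ i l * ∑ j, Ξ j l = ((Ξ * Ξᵀ) *ᵥ fun _ => 1) i := by
    simp only [mulVec, dotProduct, mul_apply, transpose_apply, mul_one, Finset.mul_sum]
    exact Finset.sum_comm
  rw [this, hG]
  simp [mulVec, dotProduct, Finset.sum_add_distrib, one_apply, sub_add_eq_add_sub, mul_comm]

theorem centeringMatrix_mul_mul_transpose_eq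
    (hG : Ξ * Ξᵀ = (1 - c) • 1 + c • of fun _ _ => 1) :
    (centeringMatrix ι * Ξ) * (centeringMatrix ι * Ξ)ᵀ = (1 - c) • centeringMatrix ι := by
  rw [transpose_mul, transpose_centeringMatrix, Matrix.mul_assoc, ← Matrix.mul_assoc Ξ, hG,
    add_mul, mul_add, smul_mul, smul_mul, one_mul, Matrix.mul_smul, Matrix.mul_smul,
    centeringMatrix_mul_self, ← Matrix.mul_assoc, centeringMatrix_mul_ones]
  simp

theorem dotProduct_self_centeringMatrix_mul_mulVec_le
    (hG : Ξ * Ξᵀ = (1 - c) • 1 + c • of fun _ _ => 1) (hc : c ≤ 1)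
    (x : n → ℝ) :
    ((centeringMatrix ι * Ξ) *ᵥ x) ⬝ᵥ ((centeringMatrix ι * Ξ) *ᵥ x) ≤ (1 - c) * (x ⬝ᵥ x) := by
  refine dotProduct_self_mulVec_le_of_transpose _ (sub_nonneg.2 hc) (fun y => ?_) x
  rw [← dotProduct_mulVec_transpose_mul_self, transpose_transpose,
    centeringMatrix_mul_mul_transpose_eq hG, smul_mulVec, dotProduct_smul, smul_eq_mul]
  exact mul_le_mul_of_nonneg_left (dotProduct_centeringMatrix_mulVec_le y) (sub_nonneg.2 hc)

theorem exists_dotProduct_self_centeringMatrix_mul_mulVec_eq [Nontrivial ι]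
    (hG : Ξ * Ξᵀ = (1 - c) • 1 + c • of fun _ _ => 1) (hc : c < 1) :
    ∃ v : n → ℝ, v ⬝ᵥ v = 1 ∧
      ((centeringMatrix ι * Ξ) *ᵥ v) ⬝ᵥ ((centeringMatrix ι * Ξ) *ᵥ v) = 1 - c := by
  obtain ⟨i, j, hij⟩ := exists_pair_ne ι
  have hu : Pi.single i 1 - Pi.single j 1 ≠ (0 : ι → ℝ) := fun h => by
    simpa [hij] using congr_fun h i
  refine exists_dotProduct_self_eq_one_of_mul_transpose_mulVec _ (sub_pos.2 hc) hu ?_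
  rw [centeringMatrix_mul_mul_transpose_eq hG, smul_mulVec,
    centeringMatrix_mulVec_of_sum_eq_zero (by simp [Finset.sum_sub_distrib])]

end Equiangular

theorem equiangular_progenitor_stability_general {K : ℕ} (hK : 2 ≤ K)
    (Ξ : Matrix (Fin K) (Fin K) ℝ) (β : ℝ) (hβ : 0 < β)
    (hnorm : ∀ i, ∑ l, Ξ i l ^ 2 = 1) (μ : ℝ)
    (hangle : ∀ i j, i ≠ j → ∑ l, Ξ i l * Ξ j l = Real.cos μ)
    (h2 : Real.cos μ ≠ 1)
    (Ξstar : Fin K → ℝ) (hstar : Ξstar = fun l => (∑ i, Ξ i l) / K)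
    (s : Fin K → ℝ) (hs : s = softmax (fun i => β * ∑ l, Ξ i l * Ξstar l))
    (J : Matrix (Fin K) (Fin K) ℝ)
    (hJ : J = Matrix.diagonal s - Matrix.vecMulVec s s) :
    (∀ i, s i = 1 / K) ∧
    IsGreatest {c : ℝ | ∃ v : Fin K → ℝ, (∑ l, v l ^ 2) = 1 ∧
        c = v ⬝ᵥ (Ξᵀ * J * Ξ).mulVec v} ((1 - Real.cos μ) / K) ∧
    (β * (1 - Real.cos μ) < K →
      ((1 : Matrix (Fin K) (Fin K) ℝ) - β • (Ξᵀ * J * Ξ)).PosDef) := by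
  have : Nontrivial (Fin K) := Fin.nontrivial_iff_two_le.2 hK
  have hc : Real.cos μ < 1 := (Real.cos_le_one μ).lt_of_ne h2
  have hG := mul_transpose_eq_of_equiangular hnorm hangle
  have hsK : s = fun _ => 1 / (K : ℝ) := by
    simp only [hs, hstar, mul_div_assoc', ← Finset.sum_div, sum_mul_sum_eq_of_mul_transpose_eq hG]
    simpa using softmax_const (ι := Fin K) _
  set C := centeringMatrix (Fin K) * Ξ
  have hM : Ξᵀ * J * Ξ = (K : ℝ)⁻¹ • (Cᵀ * C) := by
    have hJK := diagonal_sub_vecMulVec_uniform (ι := Fin K)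
    rw [Fintype.card_fin] at hJK
    rw [hJ, hsK, hJK, Matrix.mul_smul, Matrix.smul_mul, transpose_mul_centeringMatrix_mul]
  have hquad (v : Fin K → ℝ) : v ⬝ᵥ (Ξᵀ * J * Ξ) *ᵥ v = (C *ᵥ v ⬝ᵥ C *ᵥ v) / K := by
    rw [hM, smul_mulVec, dotProduct_smul, dotProduct_mulVec_transpose_mul_self, smul_eq_mul,
      inv_mul_eq_div]
  have hsq (v : Fin K → ℝ) : ∑ l, v l ^ 2 = v ⬝ᵥ v := by simp [dotProduct, sq]
  refine ⟨fun i => by rw [hsK], ⟨?_, ?_⟩, fun hβK => ?_⟩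
  · obtain ⟨v, hv, hCv⟩ := exists_dotProduct_self_centeringMatrix_mul_mulVec_eq hG hc
    exact ⟨v, by rw [hsq, hv], by rw [hquad, hCv]⟩
  · rintro _ ⟨v, hv, rfl⟩
    rw [hquad]
    gcongr
    simpa [← hsq, hv] using dotProduct_self_centeringMatrix_mul_mulVec_le hG hc.le v
  · refine posDef_one_sub_of_dotProduct_mulVec_le ?_ (a := β * (1 - Real.cos μ) / K)
      (by rwa [div_lt_one (by positivity)]) fun x => ?_
    · rw [hM]
      exact ((isSymm_transpose_mul_self C).smul _).smul _
    · rw [smul_mulVec, dotProduct_smul, hquad, smul_eq_mul, mul_div_assoc', div_mul_eq_mul_div,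
        mul_assoc]
      gcongr
      exact dotProduct_self_centeringMatrix_mul_mulVec_le hG hc.le x

/-- for `K` equiangular unit patterns, `w = 0` and `Ξ* = (1/K)∑ Ξ_i`:
the softmax at `Ξ*` is uniform, the maximum of the Rayleigh quotient
`vᵀΞᵀ(D_s − s⊗s)Ξv` over unit vectors equals `(1 − cos μ)/K`, and hence the Hessian
`I − βΞᵀ(D_s − s⊗s)Ξ` is positive definite whenever `β(1 − cos μ) < K`. -/
theorem equiangular_progenitor_stability {K : ℕ} (hK : 2 ≤ K)
    (Ξ : Matrix (Fin K) (Fin K) ℝ) (β : ℝ) (hβ : 0 < β)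
    (hnorm : ∀ i, ∑ l, Ξ i l ^ 2 = 1) (μ : ℝ) (hμ : 0 < μ)
    (hangle : ∀ i j, i ≠ j → ∑ l, Ξ i l * Ξ j l = Real.cos μ)
    (h1 : Real.cos μ ≠ -1 / ((K : ℝ) - 1)) (h2 : Real.cos μ ≠ 1)
    (Ξstar : Fin K → ℝ) (hstar : Ξstar = fun l => (∑ i, Ξ i l) / K)
    (s : Fin K → ℝ) (hs : s = softmax (fun i => β * ∑ l, Ξ i l * Ξstar l))
    (J : Matrix (Fin K) (Fin K) ℝ)
    (hJ : J = Matrix.diagonal s - Matrix.vecMulVec s s) :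
    (∀ i, s i = 1 / K) ∧
    IsGreatest {c : ℝ | ∃ v : Fin K → ℝ, (∑ l, v l ^ 2) = 1 ∧
        c = v ⬝ᵥ (Ξᵀ * J * Ξ).mulVec v} ((1 - Real.cos μ) / K) ∧
    (β * (1 - Real.cos μ) < K →
      ((1 : Matrix (Fin K) (Fin K) ℝ) - β • (Ξᵀ * J * Ξ)).PosDef) :=
  equiangular_progenitor_stability_general hK Ξ β hβ hnorm μ hangle h2 Ξstar hstar s hs J hJ
end
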